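/- Let Δ be a d-dimensional normal simplicial pseudomanifold with banner number b_Δ. Then the 1-skeleton graph of Δ is (2d − b_Δ)-connected. -/

import Mathlib

open Finset

variable {V : Type*} [DecidableEq V]

/-- A (finite abstract) simplicial complex: a nonempty, downward closed family of finite
vertex sets (the empty face is always included). -/
def IsComplex (K : Set (Finset V)) : Prop :=
  K.Nonempty ∧ ∀ σ ∈ K, ∀ τ : Finset V, τ ⊆ σ → τ ∈ K

/-- A facet: a face maximal under inclusion. -/
def IsFacet (K : Set (Finset V)) (F : Finset V) : Prop :=
  F ∈ K ∧ ∀ G ∈ K, F ⊆ G → G = F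

/-- PureCplx of dimension `d`: every face is contained in a facet and all facets have `d+1` vertices. -/
def PureCplx (K : Set (Finset V)) (d : ℕ) : Prop :=
  (∀ σ ∈ K, ∃ F, IsFacet K F ∧ σ ⊆ F) ∧ ∀ F, IsFacet K F → F.card = d + 1

def IsVertex (K : Set (Finset V)) (x : V) : Prop := ({x} : Finset V) ∈ K

/-- The 1-skeleton graph of a complex (on the ambient vertex type). -/
def skeleton (K : Set (Finset V)) : SimpleGraph V where
  Adj x y := x ≠ y ∧ ({x, y} : Finset V) ∈ K
  symm := by
    constructor
    intro x y h
    exact ⟨h.1.symm, by rw [Finset.pair_comm]; exact h.2⟩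
  loopless := ⟨fun x h => h.1 rfl⟩

/-- A clique of the 1-skeleton of `K`. -/
def IsCliqueIn (K : Set (Finset V)) (T : Finset V) : Prop :=
  ∀ u ∈ T, ∀ v ∈ T, u ≠ v → ({u, v} : Finset V) ∈ K

/-- A critical clique: removing some vertex yields a face. -/
def IsCritical (K : Set (Finset V)) (T : Finset V) : Prop :=
  ∃ v ∈ T, T.erase v ∈ K

/-- `K` contains the boundary complex of a `(d+1)`-simplex as a subcomplex. -/
def ContainsSimplexBoundary (K : Set (Finset V)) (d : ℕ) : Prop :=
  ∃ S : Finset V, S.card = d + 2 ∧ ∀ τ : Finset V, τ ⊆ S → τ ≠ S → τ ∈ K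

/-- Banner (for a pure `d`-complex): every critical `(d+1)`-clique is spanning and no
boundary of a `(d+1)`-simplex occurs as a subcomplex. -/
def Banner (K : Set (Finset V)) (d : ℕ) : Prop :=
  (∀ T : Finset V, IsCliqueIn K T → T.card = d + 1 → IsCritical K T → T ∈ K) ∧
    ¬ ContainsSimplexBoundary K d

/-- Strongly banner: every `(d+1)`-clique is spanning and no boundary of a `(d+1)`-simplex
occurs as a subcomplex. -/
def StronglyBanner (K : Set (Finset V)) (d : ℕ) : Prop :=
  (∀ T : Finset V, IsCliqueIn K T → T.card = d + 1 → T ∈ K) ∧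
    ¬ ContainsSimplexBoundary K d

/-- FlagCplx: every clique of the 1-skeleton is a face. -/
def FlagCplx (K : Set (Finset V)) : Prop :=
  ∀ T : Finset V, IsCliqueIn K T → T ∈ K

/-- The link of a face `σ`. -/
def link (K : Set (Finset V)) (σ : Finset V) : Set (Finset V) :=
  {τ : Finset V | Disjoint τ σ ∧ τ ∪ σ ∈ K}

/-- The facet graph of a pure `d`-complex: facets adjacent when they share a `(d-1)`-face
(i.e. their intersection has `d` vertices). -/
def facetGraph (K : Set (Finset V)) (d : ℕ) : SimpleGraph {F : Finset V // IsFacet K F} where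
  Adj F G := F ≠ G ∧ ((F : Finset V) ∩ (G : Finset V)).card = d
  symm := by
    constructor
    intro F G h
    exact ⟨h.1.symm, by rw [Finset.inter_comm]; exact h.2⟩
  loopless := ⟨fun F h => h.1 rfl⟩

/-- Strong connectivity: the facet graph is connected. -/
def StronglyConnected (K : Set (Finset V)) (d : ℕ) : Prop :=
  (facetGraph K d).Connected

/-- A `d`-dimensional pseudomanifold: pure `d`-complex, every `(d-1)`-face is in exactly
two facets, and the facet graph is connected. -/
def Pseudomanifold (K : Set (Finset V)) (d : ℕ) : Prop :=
  IsComplex K ∧ PureCplx K d ∧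
    (∀ σ ∈ K, σ.card = d → {F : Finset V | IsFacet K F ∧ σ ⊆ F}.ncard = 2) ∧
    StronglyConnected K d

/-- Connectivity of a complex: the 1-skeleton induced on its vertex set is connected. -/
def ComplexConnected (K : Set (Finset V)) : Prop :=
  ((skeleton K).induce {x : V | IsVertex K x}).Connected

/-- A normal pseudomanifold: all links of faces of dimension at least one are connected. -/
def NormalPM (K : Set (Finset V)) (d : ℕ) : Prop :=
  Pseudomanifold K d ∧ ∀ σ ∈ K, σ.card + 1 ≤ d → ComplexConnected (link K σ)

/-- The closed neighborhood `N(x)`: `x` together with its neighbors. -/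
def closedNbhd (K : Set (Finset V)) (x : V) : Set V :=
  {x} ∪ {z : V | ({x, z} : Finset V) ∈ K}

/-- The subcomplex induced on a set `A` of vertices. -/
def inducedSub (K : Set (Finset V)) (A : Set V) : Set (Finset V) :=
  {σ ∈ K | ∀ v ∈ σ, v ∈ A}

/-- The antistar of a vertex: the induced subcomplex on all other vertices. -/
def antistar (K : Set (Finset V)) (x : V) : Set (Finset V) :=
  {σ ∈ K | x ∉ σ}

/-- `K` is the boundary of a triangle, i.e. the 3-cycle `C₃`. -/
def IsC3 (K : Set (Finset V)) : Prop :=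
  ∃ a b c : V, a ≠ b ∧ a ≠ c ∧ b ≠ c ∧
    K = {τ : Finset V | τ ⊆ ({a, b, c} : Finset V) ∧ τ ≠ ({a, b, c} : Finset V)}

/-- The banner number of a pure `d`-complex. -/
noncomputable def bannerNumber (K : Set (Finset V)) (d : ℕ) : ℕ :=
  sInf {j : ℕ | ∀ σ ∈ K, σ.card = j → Banner (link K σ) (d - j) ∨ IsC3 (link K σ)}

/-- `k`-connectivity of a graph: more than `k` vertices, and removing fewer than `k`
vertices leaves it connected. -/
def KConnected {W : Type*} [Fintype W] [DecidableEq W] (G : SimpleGraph W) (k : ℕ) : Prop :=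
  k < Fintype.card W ∧
    ∀ S : Finset W, S.card < k → (G.induce ((↑S : Set W)ᶜ)).Connected

/-- Existence of `k` pairwise independent `u`–`v` paths: paths sharing no vertices other
than `u` and `v`. -/
def IndepPaths {W : Type*} (G : SimpleGraph W) (u v : W) (k : ℕ) : Prop :=
  ∃ p : Fin k → G.Walk u v, (∀ i, (p i).IsPath) ∧
    ∀ i j, i ≠ j → ∀ w : W, w ∈ (p i).support → w ∈ (p j).support → w = u ∨ w = v

/-!
Induction on `d` through vertex links. If `x ∈ S`, then removing `S` leaves the skeleton
connected as soon as removing `S.erase x` does, both from `K` and from the link of `x`: a path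
through `x` can be rerouted through the link. Passing to a link lowers the dimension by one and
the banner number by at least one, so for `b_Δ ≥ 1` the bound `2d - b_Δ` is inherited from the
links. For a banner complex the link tolerates one removed vertex too few; it is recovered by
choosing `x` with a non-neighbour in `S`, since in a banner complex no vertex outside a facet is
adjacent to the whole facet. One-dimensional normal pseudomanifolds are cycles.
-/

namespace SimpleGraph

variable {W : Type*} {G : SimpleGraph W}

theorem Preconnected.induce_diff_singleton {B : Set W} {x : W}
    (hB : (G.induce B).Preconnected) (hx : x ∈ B)
    (hN : ∀ a b : ↥(B \ {x}), G.Adj x a → G.Adj x b → (G.induce (B \ {x})).Reachable a b) :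
    (G.induce (B \ {x})).Preconnected := by
  have toNbr : ∀ (u v : ↥B) (p : (G.induce B).Walk u v) (hu : (u : W) ≠ x), (v : W) = x →
      ∃ n : ↥(B \ {x}), G.Adj x n ∧ (G.induce (B \ {x})).Reachable ⟨u, u.2, hu⟩ n := by
    intro u v p
    induction p with
    | nil => exact fun hu hv => absurd hv hu
    | @cons u c v huc p ih =>
      intro hu hv
      by_cases hc : (c : W) = x
      · exact ⟨⟨u, u.2, hu⟩, hc ▸ huc.symm, .rfl⟩
      · obtain ⟨n, hxn, hcn⟩ := ih hc hv
        have huc' : (G.induce (B \ {x})).Adj ⟨u, u.2, hu⟩ ⟨c, c.2, hc⟩ := huc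
        exact ⟨n, hxn, huc'.reachable.trans hcn⟩
  intro a b
  obtain ⟨pa⟩ := hB ⟨a, a.2.1⟩ ⟨x, hx⟩
  obtain ⟨pb⟩ := hB ⟨b, b.2.1⟩ ⟨x, hx⟩
  obtain ⟨na, hxa, ha⟩ := toNbr _ _ pa a.2.2 rfl
  obtain ⟨nb, hxb, hb⟩ := toNbr _ _ pb b.2.2 rfl
  exact (ha.trans (hN na nb hxa hxb)).trans hb.symm

/-- Deleting the edge `ta` keeps `t` and `a` joined; a path from `t` to `a` avoiding that edge
leaves `t` through `b` and never returns to `t`. -/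
theorem IsCycles.reachable_induce_of_adj [Finite W] (hG : G.IsCycles) {s : Set W} {t : W}
    (hs : ∀ y, y ≠ t → ∀ z, G.Adj y z → y ∈ s) (a b : ↥s) (ha : G.Adj t a) (hb : G.Adj t b) :
    (G.induce s).Reachable a b := by
  rcases eq_or_ne a b with rfl | hab
  · rfl
  obtain ⟨p, hp⟩ := (hG.reachable_deleteEdges ha).exists_isPath
  have hnil : ¬ p.Nil := Walk.not_nil_of_ne ha.ne
  have hsnd : p.snd = b := by
    have h := p.adj_snd hnil
    rw [deleteEdges_adj, Set.mem_singleton_iff] at h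
    have hne : (a : W) ≠ p.snd := fun h' => h.2 (by rw [← h'])
    obtain ⟨w, -, hw⟩ := hG.existsUnique_ne_adj ha
    rw [hw _ ⟨hne, h.1⟩, hw _ ⟨fun h' => hab (Subtype.ext h'), hb⟩]
  have htail : t ∉ p.tail.support := by
    rw [← p.cons_tail_eq hnil, Walk.cons_isPath_iff] at hp
    exact hp.2
  have hnil' : ¬ p.tail.Nil :=
    Walk.not_nil_of_ne (by rw [hsnd]; exact fun h => hab (Subtype.ext h).symm)
  let q : G.Walk p.snd a := p.tail.mapLe (deleteEdges_le _)
  have hq : ∀ y ∈ q.support, y ∈ s := by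
    intro y hy
    rw [Walk.support_mapLe_eq_support] at hy
    obtain ⟨z, -, hyz⟩ := adj_of_mem_walk_support _ hnil' hy
    exact hs y (fun h => htail (h ▸ hy)) z (deleteEdges_le _ hyz)
  have := (q.induce s hq).reachable
  simp only [hsnd] at this
  exact this.symm

end SimpleGraph

section Complexes

def vertexSet (K : Set (Finset V)) : Set V := {x | IsVertex K x}

theorem IsComplex.empty_mem {α : Type*} {K : Set (Finset α)} (hK : IsComplex K) :
    (∅ : Finset α) ∈ K := by
  obtain ⟨σ, hσ⟩ := hK.1
  exact hK.2 σ hσ ∅ (empty_subset σ)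

theorem IsComplex.mem_vertexSet {α : Type*} {K : Set (Finset α)} {σ : Finset α} {x : α}
    (hK : IsComplex K) (hσ : σ ∈ K) (hx : x ∈ σ) : x ∈ vertexSet K :=
  hK.2 σ hσ {x} (singleton_subset_iff.mpr hx)

theorem PureCplx.card_le {α : Type*} {K : Set (Finset α)} {σ : Finset α} {d : ℕ}
    (hp : PureCplx K d) (hσ : σ ∈ K) : σ.card ≤ d + 1 := by
  obtain ⟨F, hF, hσF⟩ := hp.1 σ hσ
  exact hp.2 F hF ▸ card_le_card hσF

theorem PureCplx.isFacet_of_card {α : Type*} {K : Set (Finset α)} {σ : Finset α} {d : ℕ}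
    (hp : PureCplx K d) (hσ : σ ∈ K) (hc : σ.card = d + 1) : IsFacet K σ := by
  obtain ⟨F, hF, hσF⟩ := hp.1 σ hσ
  rwa [eq_of_subset_of_card_le hσF (by rw [hc, hp.2 F hF])]

theorem PureCplx.vertexSet_nonempty {α : Type*} {K : Set (Finset α)} {d : ℕ}
    (hK : IsComplex K) (hp : PureCplx K d) : (vertexSet K).Nonempty := by
  obtain ⟨F, hF, -⟩ := hp.1 ∅ hK.empty_mem
  obtain ⟨x, hx⟩ : F.Nonempty := card_pos.mp (by rw [hp.2 F hF]; omega)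
  exact ⟨x, hK.mem_vertexSet hF.1 hx⟩

variable {K : Set (Finset V)} {σ τ : Finset V} {x y : V} {d : ℕ}

theorem IsComplex.mem_vertexSet_of_adj (hK : IsComplex K) (h : (skeleton K).Adj x y) :
    x ∈ vertexSet K :=
  hK.mem_vertexSet h.2 (mem_insert_self x _)

theorem mem_link_singleton : τ ∈ link K {x} ↔ x ∉ τ ∧ insert x τ ∈ K := by
  rw [link, Set.mem_ofPred_eq, disjoint_singleton_right, union_comm, ← insert_eq]

theorem mem_vertexSet_link : y ∈ vertexSet (link K {x}) ↔ y ≠ x ∧ ({x, y} : Finset V) ∈ K := by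
  simp only [vertexSet, IsVertex, Set.mem_ofPred_eq, mem_link_singleton, mem_singleton]
  exact and_congr_left' ne_comm

theorem link_empty : link K ∅ = K := by
  ext τ; simp [link]

theorem link_link (h : Disjoint τ σ) : link (link K σ) τ = link K (τ ∪ σ) := by
  ext ρ
  simp only [link, Set.mem_ofPred_eq, disjoint_union_right, disjoint_union_left, union_assoc]
  tauto

theorem isComplex_link (hK : IsComplex K) (hσ : σ ∈ K) : IsComplex (link K σ) :=
  ⟨⟨∅, by simp [link, hσ]⟩, fun _ hτ _ hρ =>
    ⟨disjoint_of_subset_left hρ hτ.1, hK.2 _ hτ.2 _ (union_subset_union_left hρ)⟩⟩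

theorem IsComplex.link_subset (hK : IsComplex K) (σ : Finset V) : link K σ ⊆ K :=
  fun _ hτ => hK.2 _ hτ.2 _ subset_union_left

theorem IsComplex.skeleton_link_le (hK : IsComplex K) (σ : Finset V) :
    skeleton (link K σ) ≤ skeleton K :=
  fun _ _ h => ⟨h.1, hK.link_subset σ h.2⟩

theorem IsComplex.vertexSet_link_subset (hK : IsComplex K) (x : V) :
    vertexSet (link K {x}) ⊆ vertexSet K \ {x} := fun y hy => by
  rw [mem_vertexSet_link] at hy
  exact ⟨hK.mem_vertexSet hy.2 (by simp), hy.1⟩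

theorem isFacet_link_singleton : IsFacet (link K {x}) τ ↔ x ∉ τ ∧ IsFacet K (insert x τ) := by
  constructor
  · rintro ⟨hτ, hmax⟩
    rw [mem_link_singleton] at hτ
    refine ⟨hτ.1, hτ.2, fun F hF hxF => ?_⟩
    have hx : x ∈ F := hxF (mem_insert_self x τ)
    have hF' : F.erase x ∈ link K {x} := by
      rw [mem_link_singleton, insert_erase hx]; exact ⟨notMem_erase x F, hF⟩
    have hτF : τ ⊆ F.erase x := fun a ha =>
      mem_erase.mpr ⟨ne_of_mem_of_not_mem ha hτ.1, hxF (mem_insert_of_mem ha)⟩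
    rw [← hmax _ hF' hτF, insert_erase hx]
  · rintro ⟨hx, hF, hmax⟩
    refine ⟨mem_link_singleton.mpr ⟨hx, hF⟩, fun G hG hτG => ?_⟩
    rw [mem_link_singleton] at hG
    have := hmax _ hG.2 (insert_subset_insert x hτG)
    rw [← erase_insert hG.1, this, erase_insert hx]

end Complexes

/-- A normal pseudomanifold without the strong-connectivity axiom; unlike `NormalPM`, this is
visibly inherited by vertex links. -/
structure WeakNormalPM (K : Set (Finset V)) (d : ℕ) : Prop where
  isComplex : IsComplex K
  pure : PureCplx K d
  ridge : ∀ σ ∈ K, σ.card = d → {F : Finset V | IsFacet K F ∧ σ ⊆ F}.ncard = 2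
  normal : ∀ σ ∈ K, σ.card + 1 ≤ d → ComplexConnected (link K σ)

theorem NormalPM.weakNormalPM {K : Set (Finset V)} {d : ℕ} (h : NormalPM K d) :
    WeakNormalPM K d :=
  ⟨h.1.1, h.1.2.1, h.1.2.2.1, h.2⟩

namespace WeakNormalPM

variable {K : Set (Finset V)} {σ : Finset V} {x : V} {d : ℕ}

theorem exists_facets (h : WeakNormalPM K d) (hσ : σ ∈ K) (hc : σ.card = d) :
    ∃ u v, u ≠ v ∧ u ∉ σ ∧ v ∉ σ ∧ IsFacet K (insert u σ) ∧ IsFacet K (insert v σ) ∧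
      ∀ w ∉ σ, IsFacet K (insert w σ) → w = u ∨ w = v := by
  obtain ⟨A, B, hAB, hset⟩ := Set.ncard_eq_two.mp (h.ridge σ hσ hc)
  have mem_iff : ∀ F, F = A ∨ F = B ↔ IsFacet K F ∧ σ ⊆ F := fun F => by
    simpa using (Set.ext_iff.mp hset F).symm
  have insert_of : ∀ F, F = A ∨ F = B → ∃ u ∉ σ, insert u σ = F := fun F hF => by
    obtain ⟨hF, hσF⟩ := (mem_iff F).mp hF
    exact exists_eq_insert_iff.mpr ⟨hσF, by rw [hc, h.pure.2 F hF]⟩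
  obtain ⟨u, hu, rfl⟩ := insert_of A (Or.inl rfl)
  obtain ⟨v, hv, rfl⟩ := insert_of B (Or.inr rfl)
  refine ⟨u, v, fun huv => hAB (by rw [huv]), hu, hv, ((mem_iff _).mp (Or.inl rfl)).1,
    ((mem_iff _).mp (Or.inr rfl)).1, fun w hw hF => ?_⟩
  simpa only [insert_inj hw] using (mem_iff _).mpr ⟨hF, subset_insert w σ⟩

theorem complexConnected (h : WeakNormalPM K d) (hd : 1 ≤ d) : ComplexConnected K := by
  simpa only [link_empty] using h.normal ∅ h.isComplex.empty_mem (by simpa)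

theorem exists_facet_notMem (h : WeakNormalPM K d) (x : V) : ∃ F, IsFacet K F ∧ x ∉ F := by
  obtain ⟨F, hF, -⟩ := h.pure.1 ∅ h.isComplex.empty_mem
  by_cases hxF : x ∈ F
  · have hρ : F.erase x ∈ K := h.isComplex.2 F hF.1 _ (erase_subset x F)
    obtain ⟨u, v, huv, -, -, hu, hv, -⟩ :=
      h.exists_facets hρ (by rw [card_erase_of_mem hxF, h.pure.2 F hF]; rfl)
    have avoid : ∀ w, w ≠ x → x ∉ insert w (F.erase x) := fun w hw => by
      simp [Ne.symm hw]
    rcases eq_or_ne u x with rfl | hux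
    · exact ⟨_, hv, avoid v (Ne.symm huv)⟩
    · exact ⟨_, hu, avoid u hux⟩
  · exact ⟨F, hF, hxF⟩

end WeakNormalPM

theorem weakNormalPM_link {K : Set (Finset V)} {x : V} {d : ℕ} (h : WeakNormalPM K (d + 1))
    (hx : x ∈ vertexSet K) : WeakNormalPM (link K {x}) d where
  isComplex := isComplex_link h.isComplex hx
  pure := by
    refine ⟨fun τ hτ => ?_, fun G hG => ?_⟩
    · rw [mem_link_singleton] at hτ
      obtain ⟨F, hF, hτF⟩ := h.pure.1 _ hτ.2
      have hxF : x ∈ F := hτF (mem_insert_self x τ)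
      refine ⟨F.erase x, isFacet_link_singleton.mpr ⟨notMem_erase x F, ?_⟩, ?_⟩
      · rwa [insert_erase hxF]
      · exact subset_erase.mpr ⟨(subset_insert x τ).trans hτF, hτ.1⟩
    · obtain ⟨hxG, hG⟩ := isFacet_link_singleton.mp hG
      have := h.pure.2 _ hG
      rw [card_insert_of_notMem hxG] at this
      omega
  ridge := by
    intro τ hτ hc
    rw [mem_link_singleton] at hτ
    have himage : insert x '' {G | IsFacet (link K {x}) G ∧ τ ⊆ G} =
        {F | IsFacet K F ∧ insert x τ ⊆ F} := by
      ext F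
      simp only [Set.mem_image, Set.mem_ofPred_eq, isFacet_link_singleton]
      constructor
      · rintro ⟨G, ⟨⟨-, hG⟩, hτG⟩, rfl⟩
        exact ⟨hG, insert_subset_insert x hτG⟩
      · rintro ⟨hF, hτF⟩
        have hxF : x ∈ F := hτF (mem_insert_self x τ)
        refine ⟨F.erase x, ⟨⟨notMem_erase x F, by rwa [insert_erase hxF]⟩, ?_⟩,
          insert_erase hxF⟩
        exact subset_erase.mpr ⟨(subset_insert x τ).trans hτF, hτ.1⟩
    rw [← h.ridge _ hτ.2 (by rw [card_insert_of_notMem hτ.1, hc]), ← himage,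
      Set.InjOn.ncard_image]
    rintro G₁ ⟨hG₁, -⟩ G₂ ⟨hG₂, -⟩ heq
    rw [← erase_insert (isFacet_link_singleton.mp hG₁).1,
      ← erase_insert (isFacet_link_singleton.mp hG₂).1]
    exact congrArg (erase · x) heq
  normal := by
    intro σ hσ hc
    have hxσ := disjoint_singleton_right.mpr (mem_link_singleton.mp hσ).1
    rw [link_link hxσ]
    refine h.normal _ hσ.2 ?_
    rw [card_union_of_disjoint hxσ, card_singleton]
    omega

section Removal

variable {K : Set (Finset V)} {S T : Finset V} {x : V}

def ConnectedAvoiding (K : Set (Finset V)) (S : Finset V) : Prop :=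
  ((skeleton K).induce (vertexSet K \ ↑S)).Connected

/-- `KConnected` for the skeleton induced on `vertexSet K`, phrased on the ambient vertex type so
that it applies verbatim to links. -/
def SkeletonKConnected (K : Set (Finset V)) (k : ℕ) : Prop :=
  k < (vertexSet K).ncard ∧
    ∀ S : Finset V, ↑S ⊆ vertexSet K → S.card < k → ConnectedAvoiding K S

theorem SkeletonKConnected.mono {j k : ℕ} (h : SkeletonKConnected K k) (hjk : j ≤ k) :
    SkeletonKConnected K j :=
  ⟨hjk.trans_lt h.1, fun S hS hSj => h.2 S hS (hSj.trans_le hjk)⟩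

theorem connectedAvoiding_empty : ConnectedAvoiding K ∅ ↔ ComplexConnected K := by
  rw [ConnectedAvoiding, coe_empty, Set.sdiff_empty]; rfl

theorem connectedAvoiding_congr (h : vertexSet K \ ↑S = vertexSet K \ ↑T) :
    ConnectedAvoiding K S ↔ ConnectedAvoiding K T := by
  rw [ConnectedAvoiding, ConnectedAvoiding, h]

theorem connectedAvoiding_of_forall_notMem (h : ComplexConnected K)
    (hS : ∀ x ∈ S, x ∉ vertexSet K) : ConnectedAvoiding K S :=
  (connectedAvoiding_congr (Set.ext fun x => by simpa using fun hx hxS => hS x hxS hx)).mp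
    (connectedAvoiding_empty.mpr h)

theorem connectedAvoiding_of_reachable_neighbors (hx : x ∈ S) (hxK : x ∈ vertexSet K)
    (h : ConnectedAvoiding K (S.erase x)) (hne : (vertexSet K \ ↑S).Nonempty)
    (hN : ∀ a b : ↥(vertexSet K \ ↑S), (skeleton K).Adj x a → (skeleton K).Adj x b →
      ((skeleton K).induce (vertexSet K \ ↑S)).Reachable a b) :
    ConnectedAvoiding K S := by
  have hset : vertexSet K \ ↑S = (vertexSet K \ ↑(S.erase x)) \ {x} := by
    rw [Set.sdiff_sdiff, coe_erase, Set.sdiff_union_self, Set.union_eq_left.mpr]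
    simpa using hx
  unfold ConnectedAvoiding at h ⊢
  rw [hset] at hN hne ⊢
  exact (SimpleGraph.connected_iff _).mpr
    ⟨h.preconnected.induce_diff_singleton ⟨hxK, by simp⟩ hN, hne.to_subtype⟩

theorem connectedAvoiding_of_link (hK : IsComplex K) (hx : x ∈ S)
    (h : ConnectedAvoiding K (S.erase x)) (hlk : ConnectedAvoiding (link K {x}) (S.erase x)) :
    ConnectedAvoiding K S := by
  have hL : vertexSet (link K {x}) \ ↑(S.erase x) ⊆ vertexSet K \ ↑S := fun w hw => by
    obtain ⟨hwK, hwx⟩ := hK.vertexSet_link_subset x hw.1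
    exact ⟨hwK, fun hwS => hw.2 (mem_erase.mpr ⟨hwx, hwS⟩)⟩
  have adj_mem : ∀ a : ↥(vertexSet K \ ↑S), (skeleton K).Adj x a →
      (a : V) ∈ vertexSet (link K {x}) \ ↑(S.erase x) := fun a hxa =>
    ⟨mem_vertexSet_link.mpr ⟨hxa.1.symm, hxa.2⟩, fun ha => a.2.2 (mem_of_mem_erase ha)⟩
  obtain ⟨⟨w, hw⟩⟩ := hlk.nonempty
  have hxK : x ∈ vertexSet K := hK.mem_vertexSet (mem_vertexSet_link.mp hw.1).2 (by simp)
  refine connectedAvoiding_of_reachable_neighbors hx hxK h ⟨w, hL hw⟩ fun a b hxa hxb => ?_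
  exact (hlk.preconnected ⟨a, adj_mem a hxa⟩ ⟨b, adj_mem b hxb⟩).map
    (SimpleGraph.induceHom (.ofLE (hK.skeleton_link_le {x})) hL)

theorem connectedAvoiding_of_link_of_subset (hK : IsComplex K) (hx : x ∈ S)
    (h : ConnectedAvoiding K (S.erase x))
    (hlk : ∀ T ⊆ S.erase x, ↑T ⊆ vertexSet (link K {x}) → ConnectedAvoiding (link K {x}) T) :
    ConnectedAvoiding K S := by
  classical
  refine connectedAvoiding_of_link hK hx h ?_
  refine (connectedAvoiding_congr ?_).mp
    (hlk ((S.erase x).filter (· ∈ vertexSet (link K {x}))) (filter_subset _ _)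
      fun a ha => (mem_filter.mp (mem_coe.mp ha)).2)
  ext w
  simp only [coe_filter, mem_erase, ne_eq, Set.mem_sdiff, Set.mem_ofPred_eq, not_and, and_imp,
    coe_erase, SetLike.mem_coe, Set.mem_singleton_iff, Decidable.not_not, and_congr_right_iff]
  tauto

end Removal

section Banner

variable {K L : Set (Finset V)} {ρ S T : Finset V} {x w : V} {d : ℕ}

theorem isCliqueIn_of_mem (hK : IsComplex K) (hρ : ρ ∈ K) : IsCliqueIn K ρ :=
  fun _ hu _ hv _ => hK.2 ρ hρ _ (insert_subset hu (singleton_subset_iff.mpr hv))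

theorem IsCliqueIn.mono (hT : IsCliqueIn K T) (hKL : K ⊆ L) : IsCliqueIn L T :=
  fun u hu v hv huv => hKL (hT u hu v hv huv)

theorem IsCliqueIn.insert (hT : IsCliqueIn K T) (hw : ∀ y ∈ T, y ≠ w → ({w, y} : Finset V) ∈ K) :
    IsCliqueIn K (insert w T) := by
  intro u hu v hv huv
  rcases mem_insert.mp hu with rfl | hu'
  · rcases mem_insert.mp hv with rfl | hv'
    · exact absurd rfl huv
    · exact hw v hv' (Ne.symm huv)
  · rcases mem_insert.mp hv with rfl | hv'
    · rw [pair_comm]; exact hw u hu' huv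
    · exact hT u hu' v hv' huv

theorem IsCliqueIn.mem_vertexSet (hK : IsComplex K) (hT : IsCliqueIn K T) (h2 : 2 ≤ T.card)
    (hx : x ∈ T) : x ∈ vertexSet K := by
  obtain ⟨y, hy, hyx⟩ := exists_mem_ne (by omega : 1 < T.card) x
  exact hK.mem_vertexSet (hT x hx y hy (Ne.symm hyx)) (mem_insert_self x _)

theorem Banner.insert_mem (hK : IsComplex K) (hB : Banner K d) (hρ : ρ ∈ K) (hc : ρ.card = d)
    (hw : w ∉ ρ) (hadj : ∀ y ∈ ρ, ({w, y} : Finset V) ∈ K) : insert w ρ ∈ K :=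
  hB.1 _ ((isCliqueIn_of_mem hK hρ).insert fun y hy _ => hadj y hy)
    (by rw [card_insert_of_notMem hw, hc]) ⟨w, mem_insert_self w ρ, by rwa [erase_insert hw]⟩

/-- Otherwise every `insert w (F.erase y)` is a critical clique, hence a face, and `insert w F`
spans the boundary of a simplex. -/
theorem Banner.exists_not_adj (hK : IsComplex K) (hp : PureCplx K d) (hB : Banner K d)
    {F : Finset V} (hF : IsFacet K F) (hr : w ∉ F) : ∃ y ∈ F, ({w, y} : Finset V) ∉ K := by
  by_contra! hadj
  have hFc := hp.2 F hF
  have hface : ∀ y ∈ F, insert w (F.erase y) ∈ K := fun y hy =>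
    hB.insert_mem hK (hK.2 F hF.1 _ (erase_subset y F)) (by rw [card_erase_of_mem hy, hFc]; rfl)
      (fun h => hr (mem_of_mem_erase h)) fun z hz => hadj z (mem_of_mem_erase hz)
  refine hB.2 ⟨insert w F, by rw [card_insert_of_notMem hr, hFc], fun τ hτ hne => ?_⟩
  by_cases hwτ : w ∈ τ
  · obtain ⟨y, hyF, hyτ⟩ : ∃ y ∈ F, y ∉ τ := by
      by_contra! h
      exact hne (Subset.antisymm hτ (insert_subset hwτ h))
    refine hK.2 _ (hface y hyF) τ fun a ha => ?_
    rcases mem_insert.mp (hτ ha) with rfl | haF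
    · exact mem_insert_self a _
    · exact mem_insert_of_mem (mem_erase.mpr ⟨fun h => hyτ (h ▸ ha), haF⟩)
  · exact hK.2 F hF.1 τ ((subset_insert_iff_of_notMem hwτ).mp hτ)

theorem Banner.mem_of_isCliqueIn (hK : IsComplex K) (hp : PureCplx K d) (hB : Banner K d)
    (hS : IsCliqueIn K S) (hρ : ρ ∈ K) (hρc : ρ.card = d) (hρS : ρ ⊆ S)
    (hcard : d + 1 ≤ S.card) : S ∈ K := by
  obtain ⟨w, hwS, hwρ⟩ := exists_of_ssubset (ssubset_of_subset_of_ne hρS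
    (by rintro rfl; omega))
  have hF : IsFacet K (insert w ρ) := hp.isFacet_of_card
    (hB.insert_mem hK hρ hρc hwρ fun y hy => hS w hwS y (hρS hy) fun h => hwρ (h ▸ hy))
    (by rw [card_insert_of_notMem hwρ, hρc])
  have hFS : insert w ρ ⊆ S := insert_subset hwS hρS
  by_contra hSK
  obtain ⟨r, hrS, hrF⟩ := exists_of_ssubset (ssubset_of_subset_of_ne hFS
    (by rintro rfl; exact hSK hF.1))
  obtain ⟨y, hyF, hry⟩ := hB.exists_not_adj hK hp hF hrF
  exact hry (hS r hrS y (hFS hyF) fun h => hrF (h ▸ hyF))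

end Banner

section BannerLink

variable {K : Set (Finset V)} {T : Finset V} {x : V} {d : ℕ}

theorem Banner.link_critical (hK : IsComplex K) (hB : Banner K (d + 1)) (hd : 1 ≤ d)
    (hT : IsCliqueIn (link K {x}) T) (hc : T.card = d + 1) (hcrit : IsCritical (link K {x}) T) :
    T ∈ link K {x} := by
  have hx : {x} ∈ K := by
    obtain ⟨v, -, hv⟩ := hcrit
    exact hK.2 _ hv.2 _ subset_union_right
  have hlk := isComplex_link hK hx
  have hedge : ∀ y ∈ T, y ≠ x → ({x, y} : Finset V) ∈ K := fun y hy _ =>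
    (mem_vertexSet_link.mp (hT.mem_vertexSet hlk (by omega) hy)).2
  have hxT : x ∉ T := fun hxT =>
    (mem_vertexSet_link.mp (hT.mem_vertexSet hlk (by omega) hxT)).1 rfl
  obtain ⟨v, hvT, hv⟩ := hcrit
  rw [mem_link_singleton] at hv ⊢
  refine ⟨hxT, hB.1 _ ((hT.mono (hK.link_subset _)).insert hedge)
    (by rw [card_insert_of_notMem hxT, hc]) ⟨v, mem_insert_of_mem hvT, ?_⟩⟩
  rw [erase_insert_of_ne (ne_of_mem_of_not_mem hvT hxT).symm]
  exact hv.2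

theorem Banner.link_not_containsSimplexBoundary (hK : IsComplex K) (hB : Banner K (d + 1))
    (hd : 1 ≤ d) : ¬ ContainsSimplexBoundary (link K {x}) d := by
  rintro ⟨S, hSc, hS⟩
  have proper : ∀ τ ⊆ S, τ.card < d + 2 → τ ∈ link K {x} := fun τ hτ hτc =>
    hS τ hτ (by rintro rfl; omega)
  have hxS : x ∉ S := fun hxS => (mem_link_singleton.mp
    (proper {x} (singleton_subset_iff.mpr hxS) (by rw [card_singleton]; omega))).1
      (mem_singleton_self x)
  obtain ⟨u, hu⟩ : S.Nonempty := card_pos.mp (by omega)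
  have hSK : S ∈ K := hB.1 S
    (fun a ha b hb _ => hK.link_subset _
      (proper _ (insert_subset ha (singleton_subset_iff.mpr hb)) (card_le_two.trans_lt (by omega))))
    (by rw [hSc]) ⟨u, hu, hK.link_subset _ (proper _ (erase_subset u S)
      (by rw [card_erase_of_mem hu]; omega))⟩
  refine hB.2 ⟨insert x S, by rw [card_insert_of_notMem hxS, hSc], fun τ hτ hne => ?_⟩
  by_cases hxτ : x ∈ τ
  · have hτS : τ.erase x ⊆ S := fun a ha =>
      (mem_insert.mp (hτ (mem_of_mem_erase ha))).resolve_left (ne_of_mem_erase ha)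
    have hτS' : τ.erase x ≠ S := fun h => hne (by rw [← h, insert_erase hxτ])
    have := (mem_link_singleton.mp (hS _ hτS hτS')).2
    rwa [insert_erase hxτ] at this
  · exact hK.2 S hSK τ ((subset_insert_iff_of_notMem hxτ).mp hτ)

theorem Banner.link (hK : IsComplex K) (hB : Banner K (d + 1)) (hd : 1 ≤ d) :
    Banner (link K {x}) d :=
  ⟨fun _ hT hc hcrit => hB.link_critical hK hd hT hc hcrit,
    hB.link_not_containsSimplexBoundary hK hd⟩

end BannerLink

section BannerNumber

variable {K : Set (Finset V)} {x : V} {d : ℕ}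

theorem bannerNumber_spec (hp : PureCplx K d) :
    ∀ σ ∈ K, σ.card = bannerNumber K d →
      Banner (link K σ) (d - bannerNumber K d) ∨ IsC3 (link K σ) :=
  Nat.sInf_mem (s := {j | ∀ σ ∈ K, σ.card = j → Banner (link K σ) (d - j) ∨ IsC3 (link K σ)})
    ⟨d + 2, fun _ hσ hc => absurd (hp.card_le hσ) (by omega)⟩

theorem PureCplx.not_isC3 (hp : PureCplx K d) (hd : 2 ≤ d) : ¬ IsC3 K := by
  rintro ⟨a, b, c, hab, -, -, rfl⟩
  have ha : {a} ⊆ ({a, b, c} : Finset V) ∧ {a} ≠ ({a, b, c} : Finset V) :=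
    ⟨by simp, fun h => hab (mem_singleton.mp (h ▸ by simp : b ∈ ({a} : Finset V))).symm⟩
  obtain ⟨F, hF, -⟩ := hp.1 {a} ha
  have hFc := hp.2 F hF
  have hlt := card_lt_card (ssubset_of_subset_of_ne hF.1.1 hF.1.2)
  have := card_le_three (a := a) (b := b) (c := c)
  omega

theorem banner_of_bannerNumber_eq_zero (hK : IsComplex K) (hp : PureCplx K d) (hd : 2 ≤ d)
    (h0 : bannerNumber K d = 0) : Banner K d := by
  have := bannerNumber_spec hp ∅ hK.empty_mem (by rw [h0, card_empty])
  rw [link_empty, h0, Nat.sub_zero] at this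
  exact this.resolve_right (hp.not_isC3 hd)

theorem bannerNumber_eq_zero_of_banner (hB : Banner K d) : bannerNumber K d = 0 :=
  Nat.eq_zero_of_le_zero <| Nat.sInf_le fun σ _ hσ => by
    rw [card_eq_zero.mp hσ, link_empty]; exact Or.inl hB

theorem bannerNumber_link_le (hK : IsComplex K) (hp : PureCplx K (d + 1)) (hd : 1 ≤ d) :
    bannerNumber (link K {x}) d ≤ bannerNumber K (d + 1) - 1 := by
  rcases Nat.eq_zero_or_pos (bannerNumber K (d + 1)) with h0 | hpos
  · have hB := banner_of_bannerNumber_eq_zero hK hp (by omega) h0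
    rw [bannerNumber_eq_zero_of_banner (hB.link hK hd)]
    exact Nat.zero_le _
  · refine Nat.sInf_le fun τ hτ hc => ?_
    have hxτ := disjoint_singleton_right.mpr (mem_link_singleton.mp hτ).1
    rw [link_link hxτ]
    have := bannerNumber_spec hp _ hτ.2
      (by rw [card_union_of_disjoint hxτ, card_singleton, hc]; omega)
    rwa [show d + 1 - bannerNumber K (d + 1) = d - (bannerNumber K (d + 1) - 1) by omega] at this

end BannerNumber

namespace WeakNormalPM

variable {K : Set (Finset V)}

theorem skeleton_isCycles (h : WeakNormalPM K 1) : (skeleton K).IsCycles := by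
  rintro y ⟨z, hz⟩
  obtain ⟨u, v, huv, hu, hv, hFu, hFv, huniq⟩ :=
    h.exists_facets (h.isComplex.2 _ hz.2 _ (by simp)) (card_singleton y)
  have adj_iff : ∀ w, (skeleton K).Adj y w ↔ w ∉ ({y} : Finset V) ∧ IsFacet K (insert w {y}) :=
    fun w => by
      rw [show (insert w {y} : Finset V) = {y, w} from pair_comm w y, mem_singleton]
      constructor
      · rintro ⟨hyw, hmem⟩
        exact ⟨Ne.symm hyw, h.pure.isFacet_of_card hmem (card_pair hyw)⟩
      · rintro ⟨hwy, hF⟩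
        exact ⟨Ne.symm hwy, hF.1⟩
  have : (skeleton K).neighborSet y = {u, v} := by
    ext w
    rw [SimpleGraph.mem_neighborSet, adj_iff, Set.mem_insert_iff, Set.mem_singleton_iff]
    exact ⟨fun hw => huniq w hw.1 hw.2, by rintro (rfl | rfl) <;> tauto⟩
  rw [this, Set.ncard_pair huv]

theorem connectedAvoiding_singleton [Finite V] (h : WeakNormalPM K 1) (t : V) :
    ConnectedAvoiding K {t} := by
  have h0 : ConnectedAvoiding K ∅ := connectedAvoiding_empty.mpr (h.complexConnected le_rfl)
  by_cases ht : t ∈ vertexSet K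
  · obtain ⟨u, -, -, hu, -, hFu, -⟩ := h.exists_facets ht (card_singleton t)
    refine connectedAvoiding_of_reachable_neighbors (mem_singleton_self t) ht
      (by rwa [erase_singleton]) ⟨u, h.isComplex.mem_vertexSet hFu.1 (mem_insert_self u _),
        by simpa using hu⟩ fun a b ha hb => ?_
    refine h.skeleton_isCycles.reachable_induce_of_adj (fun y hyt z hyz => ?_) a b ha hb
    exact ⟨h.isComplex.mem_vertexSet_of_adj hyz, by simpa using hyt⟩
  · exact (connectedAvoiding_congr (by simp [ht])).mpr h0

theorem connectedAvoiding_pair [Finite V] (h : WeakNormalPM K 1) {y z : V} (hyz : y ≠ z)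
    (hK : ({y, z} : Finset V) ∈ K) : ConnectedAvoiding K {y, z} := by
  have hzy : (skeleton K).Adj z y := ⟨hyz.symm, by rwa [pair_comm]⟩
  obtain ⟨w, ⟨hyw, hzw⟩, huniq⟩ := h.skeleton_isCycles.existsUnique_ne_adj hzy
  refine connectedAvoiding_of_reachable_neighbors (S := {y, z})
    (mem_insert_of_mem (mem_singleton_self z))
    (h.isComplex.mem_vertexSet_of_adj hzy) ?_ ⟨w, ?_⟩ fun a b ha hb => ?_
  · rw [erase_insert_of_ne hyz, erase_singleton, insert_empty]
    exact h.connectedAvoiding_singleton y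
  · simpa [Ne.symm hyw, Ne.symm hzw.ne] using h.isComplex.mem_vertexSet_of_adj hzw.symm
  · have avoid : ∀ c : ↥(vertexSet K \ ↑({y, z} : Finset V)), y ≠ c := fun c hc =>
      c.2.2 (by simp [← hc])
    rw [Subtype.ext ((huniq a ⟨avoid a, ha⟩).trans (huniq b ⟨avoid b, hb⟩).symm)]

theorem two_lt_ncard_vertexSet [Finite V] (h : WeakNormalPM K 1) :
    2 < (vertexSet K).ncard := by
  obtain ⟨y, hy⟩ := h.pure.vertexSet_nonempty h.isComplex
  obtain ⟨u, v, huv, hu, hv, hFu, hFv, -⟩ := h.exists_facets hy (card_singleton y)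
  have hsub : ({y, u, v} : Set V) ⊆ vertexSet K := by
    rintro a (rfl | rfl | rfl)
    · exact hy
    · exact h.isComplex.mem_vertexSet hFu.1 (mem_insert_self _ _)
    · exact h.isComplex.mem_vertexSet hFv.1 (mem_insert_self _ _)
  have h3 : ({y, u, v} : Set V).ncard = 3 :=
    Set.ncard_eq_three.mpr ⟨y, u, v, by simpa [eq_comm] using hu, by simpa [eq_comm] using hv,
      huv, rfl⟩
  have := Set.ncard_le_ncard hsub (Set.toFinite _)
  omega

theorem skeletonKConnected_two [Finite V] (h : WeakNormalPM K 1) : SkeletonKConnected K 2 := by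
  refine ⟨h.two_lt_ncard_vertexSet, fun S _ hS => ?_⟩
  obtain hS0 | hS1 : S.card = 0 ∨ S.card = 1 := by omega
  · rw [card_eq_zero.mp hS0]
    exact connectedAvoiding_empty.mpr (h.complexConnected le_rfl)
  · obtain ⟨t, rfl⟩ := card_eq_one.mp hS1
    exact h.connectedAvoiding_singleton t

end WeakNormalPM

/-- Remove the vertices of `S` one at a time: in the link of each, the rest of `S` again contains
no ridge. -/
theorem WeakNormalPM.connectedAvoiding_of_forall_not_subset {K : Set (Finset V)} {d : ℕ}
    (h : WeakNormalPM K (d + 1)) (S : Finset V)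
    (hS : ∀ ρ ∈ K, ρ.card = d + 1 → ¬ ρ ⊆ S) : ConnectedAvoiding K S := by
  have hconn := h.complexConnected le_add_self
  induction d generalizing K S with
  | zero =>
    exact connectedAvoiding_of_forall_notMem hconn fun x hxS hx =>
      hS {x} hx (card_singleton x) (singleton_subset_iff.mpr hxS)
  | succ d ih =>
    induction S using strongInduction with
    | H S ihS =>
      by_cases hx : ∃ x ∈ S, x ∈ vertexSet K
      · obtain ⟨x, hxS, hx⟩ := hx
        refine connectedAvoiding_of_link h.isComplex hxS
          (ihS _ (erase_ssubset hxS) fun ρ hρ hc hρS => hS ρ hρ hc (hρS.trans (erase_subset x S)))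
          (ih (weakNormalPM_link h hx) _ (fun τ hτ hc hτS => ?_) ?_)
        · rw [mem_link_singleton] at hτ
          refine hS _ hτ.2 (by rw [card_insert_of_notMem hτ.1, hc]) (insert_subset hxS ?_)
          exact hτS.trans (erase_subset x S)
        · exact (weakNormalPM_link h hx).complexConnected le_add_self
      · exact connectedAvoiding_of_forall_notMem hconn fun x hxS hxK => hx ⟨x, hxS, hxK⟩

namespace WeakNormalPM

variable {K : Set (Finset V)} {d : ℕ}

theorem lt_ncard_vertexSet [Finite V] (h : WeakNormalPM K (d + 1)) (hd : 1 ≤ d)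
    (hlink : ∀ x ∈ vertexSet K,
      SkeletonKConnected (link K {x}) (2 * d - bannerNumber (link K {x}) d)) :
    2 * (d + 1) - bannerNumber K (d + 1) < (vertexSet K).ncard := by
  obtain ⟨x, hx⟩ := h.pure.vertexSet_nonempty h.isComplex
  have hL := (hlink x hx).1
  have hb := bannerNumber_link_le (x := x) h.isComplex h.pure hd
  have hsub := h.isComplex.vertexSet_link_subset x
  rcases Nat.eq_zero_or_pos (bannerNumber K (d + 1)) with h0 | hpos
  · have hB := banner_of_bannerNumber_eq_zero h.isComplex h.pure (by omega) h0
    obtain ⟨G, hG, hxG⟩ := h.exists_facet_notMem x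
    obtain ⟨u, huG, hxu⟩ := hB.exists_not_adj h.isComplex h.pure hG hxG
    have hsub' : vertexSet (link K {x}) ⊆ vertexSet K \ {x, u} := fun w hw =>
      ⟨(hsub hw).1, by
        rintro (rfl | rfl)
        exacts [(hsub hw).2 rfl, hxu (mem_vertexSet_link.mp hw).2]⟩
    have hxu' : ({x, u} : Set V) ⊆ vertexSet K := by
      rintro w (rfl | rfl)
      exacts [hx, h.isComplex.mem_vertexSet hG.1 huG]
    have := Set.ncard_le_ncard hsub'
    rw [Set.ncard_sdiff hxu', Set.ncard_pair (fun h : x = u => hxG (h ▸ huG))] at this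
    omega
  · have := Set.ncard_lt_ncard (hsub.trans_ssubset (Set.sdiff_singleton_ssubset.mpr hx))
    omega

/-- Reroute through the link of some `x ∈ S`, which survives the removal of fewer than `2d`
vertices. This fails only when `S` is a clique of size `2d + 1`; such a clique either contains
no ridge, or is a facet, so that `d = 1` and `S.erase x` is an edge of the cycle `link K {x}`. -/
theorem connectedAvoiding_of_banner [Finite V] (h : WeakNormalPM K (d + 1)) (hd : 1 ≤ d)
    (hB : Banner K (d + 1)) (hlink : ∀ x ∈ vertexSet K, SkeletonKConnected (link K {x}) (2 * d))
    {S : Finset V} (hS : ↑S ⊆ vertexSet K) (hcard : S.card < 2 * (d + 1)) (hne : S.Nonempty)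
    (herase : ∀ x ∈ S, ConnectedAvoiding K (S.erase x)) : ConnectedAvoiding K S := by
  have hK := h.isComplex
  have via_link : ∀ x ∈ S, ∀ R : Finset V,
      (∀ a ∈ S.erase x, a ∈ vertexSet (link K {x}) → a ∈ R) → R.card < 2 * d →
      ConnectedAvoiding K S := fun x hxS R hR hRc =>
    connectedAvoiding_of_link_of_subset hK hxS (herase x hxS) fun T hTS hTlk =>
      (hlink x (hS hxS)).2 T hTlk ((card_le_card fun a ha => hR a (hTS ha) (hTlk ha)).trans_lt hRc)
  obtain ⟨x₀, hx₀⟩ := hne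
  by_cases hsmall : S.card ≤ 2 * d
  · exact via_link x₀ hx₀ (S.erase x₀) (fun a ha _ => ha) (by rw [card_erase_of_mem hx₀]; omega)
  by_cases hclique : IsCliqueIn K S
  · by_cases hface : ∃ ρ ∈ K, ρ.card = d + 1 ∧ ρ ⊆ S
    · obtain ⟨ρ, hρ, hρc, hρS⟩ := hface
      have hSK := hB.mem_of_isCliqueIn hK h.pure hclique hρ hρc hρS (by omega)
      have hd1 : d = 1 := by have := h.pure.card_le hSK; omega
      subst hd1
      obtain ⟨y, z, hyz, hyzS⟩ := card_eq_two.mp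
        (by rw [card_erase_of_mem hx₀]; omega : (S.erase x₀).card = 2)
      refine connectedAvoiding_of_link hK hx₀ (herase x₀ hx₀) ?_
      rw [hyzS]
      refine (weakNormalPM_link h (hS hx₀)).connectedAvoiding_pair hyz ?_
      rw [mem_link_singleton, ← hyzS, insert_erase hx₀]
      exact ⟨notMem_erase x₀ S, hSK⟩
    · exact h.connectedAvoiding_of_forall_not_subset S fun ρ hρ hc hρS => hface ⟨ρ, hρ, hc, hρS⟩
  · simp only [IsCliqueIn, not_forall] at hclique
    obtain ⟨u, hu, v, hv, huv, huvK⟩ := hclique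
    refine via_link u hu ((S.erase u).erase v) (fun a ha haL => mem_erase.mpr ⟨?_, ha⟩) ?_
    · rintro rfl
      exact huvK (mem_vertexSet_link.mp haL).2
    · rw [card_erase_of_mem (mem_erase.mpr ⟨Ne.symm huv, hv⟩), card_erase_of_mem hu]
      omega

theorem skeletonKConnected_succ [Finite V] (h : WeakNormalPM K (d + 1)) (hd : 1 ≤ d)
    (hlink : ∀ x ∈ vertexSet K,
      SkeletonKConnected (link K {x}) (2 * d - bannerNumber (link K {x}) d)) :
    SkeletonKConnected K (2 * (d + 1) - bannerNumber K (d + 1)) := by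
  refine ⟨h.lt_ncard_vertexSet hd hlink, fun S => ?_⟩
  have hlink' : ∀ x ∈ vertexSet K,
      SkeletonKConnected (link K {x}) (2 * d - (bannerNumber K (d + 1) - 1)) := fun x hx =>
    (hlink x hx).mono (by have := bannerNumber_link_le (x := x) h.isComplex h.pure hd; omega)
  induction S using strongInduction with
  | H S ih =>
    intro hS hcard
    rcases S.eq_empty_or_nonempty with rfl | ⟨x, hxS⟩
    · exact connectedAvoiding_empty.mpr (h.complexConnected le_add_self)
    have herase : ∀ y ∈ S, ConnectedAvoiding K (S.erase y) := fun y hy =>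
      ih _ (erase_ssubset hy) ((coe_subset.mpr (erase_subset y S)).trans hS)
        (by rw [card_erase_of_mem hy]; omega)
    rcases Nat.eq_zero_or_pos (bannerNumber K (d + 1)) with h0 | hpos
    · exact h.connectedAvoiding_of_banner hd
        (banner_of_bannerNumber_eq_zero h.isComplex h.pure (by omega) h0)
        (fun y hy => (hlink' y hy).mono (by omega)) hS (by omega) ⟨x, hxS⟩ herase
    · refine connectedAvoiding_of_link_of_subset h.isComplex hxS (herase x hxS)
        fun T hTS hTlk => (hlink' x (hS hxS)).2 T hTlk ?_
      have := card_le_card hTS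
      rw [card_erase_of_mem hxS] at this
      have := card_pos.mpr ⟨x, hxS⟩
      omega

end WeakNormalPM

theorem WeakNormalPM.skeletonKConnected [Finite V] {K : Set (Finset V)} {d : ℕ}
    (h : WeakNormalPM K d) : SkeletonKConnected K (2 * d - bannerNumber K d) := by
  induction d generalizing K with
  | zero =>
    refine ⟨?_, fun S _ hS => by omega⟩
    rw [Nat.mul_zero, Nat.zero_sub]
    exact (Set.ncard_pos).mpr (h.pure.vertexSet_nonempty h.isComplex)
  | succ d ih =>
    rcases Nat.eq_zero_or_pos d with rfl | hd
    · exact h.skeletonKConnected_two.mono (by omega)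
    · exact h.skeletonKConnected_succ hd fun x hx => ih (weakNormalPM_link h hx)

/-- **Main theorem.** The 1-skeleton of a normal `d`-pseudomanifold (on vertex set `V`)
is `(2d - b_Δ)`-connected, where `b_Δ` is the banner number. -/
theorem main_connectivity (K : Set (Finset V)) (d : ℕ) [Fintype V]
    (hn : NormalPM K d) (hvert : ∀ v : V, IsVertex K v) :
    KConnected (skeleton K) (2 * d - bannerNumber K d) := by
  have hV : vertexSet K = Set.univ := Set.eq_univ_of_forall hvert
  obtain ⟨hcard, hconn⟩ := hn.weakNormalPM.skeletonKConnected
  rw [hV, Set.ncard_univ, Nat.card_eq_fintype_card] at hcard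
  refine ⟨hcard, fun S hS => ?_⟩
  have := hconn S (hV ▸ Set.subset_univ _) hS
  rwa [ConnectedAvoiding, hV, ← Set.compl_eq_univ_sdiff] at this
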